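/- arXiv:1306.5857 — 3 statements merged into one kernel-verified Lean document; each statement's English description precedes it below -/
import Mathlib

section
/- Let θ ∈ (0, 1/2) and let Z : (0,∞) → [0,∞) be measurable with Z ∈ L²(0,∞). Suppose there exist C > 0 and t₀ ≥ 0 such that ∫_t^∞ Z(τ)² dτ ≤ C Z(t)^{1/(1−θ)} for almost every t ≥ t₀. Then Z ∈ L¹(t₀, ∞). -/
/-!
Write `y t = ∫ τ in Ioi t, Z τ ^ 2`. The hypothesis gives `y ^ (1 - θ) ≤ C ^ (1 - θ) * Z`, a lower
bound for `Z` in terms of `y`, and wherever `Z ≥ m > 0` one has `Z ≤ Z ^ 2 / m`. Since `y` is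
continuous, antitone and tends to `0`, there are times `t₀ = u 0 ≤ u 1 ≤ ⋯ → ∞` at which `y` halves.
On `[u n, u (n + 1)]` this bounds `∫ Z` by `(y (u n) - y (u (n + 1))) / m ≲ y (u (n + 1)) ^ θ`,
which decays geometrically. If instead `y` vanishes at a finite time, `Z = 0` a.e. afterwards and
`Z ∈ L²` handles the bounded part.
-/

open MeasureTheory Set Filter Topology

lemma integral_le_integral_sq_div {α : Type*} [MeasurableSpace α] {μ : Measure α} {f : α → ℝ}
    {m : ℝ} (hm : 0 < m) (hf : Integrable f μ) (hf2 : Integrable (fun x => f x ^ 2) μ)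
    (hmf : ∀ᵐ x ∂μ, m ≤ f x) : ∫ x, f x ∂μ ≤ (∫ x, f x ^ 2 ∂μ) / m := by
  rw [← integral_div]
  refine integral_mono_ae hf (hf2.div_const m) ?_
  filter_upwards [hmf] with x hx
  rw [le_div_iff₀ hm]
  nlinarith

lemma rpow_one_sub_le_mul_of_le_mul_rpow {θ C y z : ℝ} (hθ : θ < 1) (hC : 0 < C)
    (hy : 0 ≤ y) (hz : 0 ≤ z) (h : y ≤ C * z ^ (1 / (1 - θ))) :
    y ^ (1 - θ) ≤ C ^ (1 - θ) * z :=
  calc y ^ (1 - θ) ≤ (C * z ^ (1 / (1 - θ))) ^ (1 - θ) :=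
        Real.rpow_le_rpow hy h (sub_pos.2 hθ).le
    _ = C ^ (1 - θ) * z := by
        rw [Real.mul_rpow hC.le (by positivity), one_div,
          Real.rpow_inv_rpow hz (sub_pos.2 hθ).ne']

lemma integrable_of_integrable_sq {α : Type*} [MeasurableSpace α] {μ : Measure α}
    [IsFiniteMeasure μ] {f : α → ℝ} (hf : AEStronglyMeasurable f μ)
    (hf2 : Integrable (fun x => f x ^ 2) μ) : Integrable f μ :=
  ((memLp_two_iff_integrable_sq hf).2 hf2).integrable one_le_two

lemma exists_seq_halving {g : ℝ → ℝ} {a : ℝ} (hcont : ContinuousOn g (Ici a))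
    (hlim : Tendsto g atTop (𝓝 0)) (hanti : AntitoneOn g (Ici a)) (hpos : ∀ t ≥ a, 0 < g t) :
    ∃ u : ℕ → ℝ, u 0 = a ∧ Monotone u ∧ Tendsto u atTop atTop ∧
      ∀ n : ℕ, g (u (n + 1)) = g a / 2 ^ n := by
  have hga := hpos a le_rfl
  have hlevel : ∀ n : ℕ, ∃ t ≥ a, g t = g a / 2 ^ n := by
    intro n
    have hlev : 0 < g a / 2 ^ n := by positivity
    obtain ⟨b, hgb, hab⟩ :=
      ((hlim.eventually (gt_mem_nhds hlev)).and (eventually_ge_atTop a)).exists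
    obtain ⟨t, ht, hgt⟩ := intermediate_value_Icc' hab (hcont.mono Icc_subset_Ici_self)
      ⟨hgb.le, div_le_self hga.le (one_le_pow₀ one_le_two)⟩
    exact ⟨t, ht.1, hgt⟩
  choose t hat hgt using hlevel
  have hmono : ∀ n, t n ≤ t (n + 1) := by
    intro n
    by_contra! hlt
    have := hanti (hat _) (hat _) hlt.le
    rw [hgt, hgt, pow_succ, ← div_div] at this
    linarith [div_lt_self (div_pos hga (pow_pos two_pos n)) one_lt_two]
  let u : ℕ → ℝ := fun | 0 => a | n + 1 => t n
  have hu : Monotone u := monotone_nat_of_le_succ fun | 0 => hat 0 | n + 1 => hmono n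
  refine ⟨u, rfl, hu, tendsto_atTop_atTop_of_monotone hu fun M => ?_, hgt⟩
  have hgM := hpos (max M a) (le_max_right M a)
  obtain ⟨n, hn⟩ := pow_unbounded_of_one_lt (g a / g (max M a)) one_lt_two
  refine ⟨n + 1, ?_⟩
  by_contra! hlt
  have := hanti (hat n) (le_max_right M a) (hlt.le.trans (le_max_left M a))
  rw [hgt, le_div_iff₀ (pow_pos two_pos n)] at this
  rw [div_lt_iff₀ hgM] at hn
  linarith

noncomputable def sqTail (Z : ℝ → ℝ) (t : ℝ) : ℝ := ∫ τ in Ioi t, Z τ ^ 2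

section sqTail

variable {Z : ℝ → ℝ} {a s t : ℝ}

lemma sqTail_nonneg (Z : ℝ → ℝ) (t : ℝ) : 0 ≤ sqTail Z t :=
  setIntegral_nonneg measurableSet_Ioi fun _ _ => sq_nonneg _

lemma sqTail_sub_sqTail (hZ2 : IntegrableOn (fun x => Z x ^ 2) (Ioi a)) (has : a ≤ s)
    (hst : s ≤ t) : sqTail Z s - sqTail Z t = ∫ x in Ioc s t, Z x ^ 2 := by
  rw [sqTail, sqTail, intervalIntegral.integral_Ioi_sub_Ioi (hZ2.mono_set (Ioi_subset_Ioi has)) hst,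
    intervalIntegral.integral_of_le hst]

lemma sqTail_antitoneOn (hZ2 : IntegrableOn (fun x => Z x ^ 2) (Ioi a)) :
    AntitoneOn (sqTail Z) (Ici a) := fun _ hs _ _ hst =>
  sub_nonneg.1 <| (sqTail_sub_sqTail hZ2 hs hst).symm ▸
    setIntegral_nonneg measurableSet_Ioc fun _ _ => sq_nonneg _

lemma integrableOn_Ioi_of_sqTail_eq_zero (hZ2 : IntegrableOn (fun x => Z x ^ 2) (Ioi a))
    (h0 : sqTail Z a = 0) : IntegrableOn Z (Ioi a) := by
  have hsq := (setIntegral_eq_zero_iff_of_nonneg_ae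
    (ae_of_all _ fun x => sq_nonneg (Z x)) hZ2).1 h0
  refine (integrable_zero _ _ _).congr ?_
  filter_upwards [hsq] with x hx
  exact (pow_eq_zero_iff two_ne_zero).1 hx |>.symm

end sqTail

lemma intervalIntegral_le_mul_sqTail_rpow {Z : ℝ → ℝ} {θ K t₀ s t : ℝ} (hθ : θ ≤ 1) (hK : 0 < K)
    (hZ : IntegrableOn Z (Ioc s t)) (hZ2 : IntegrableOn (fun x => Z x ^ 2) (Ioi t₀))
    (hlow : ∀ᵐ τ ∂volume.restrict (Ici t₀), sqTail Z τ ^ (1 - θ) ≤ K * Z τ)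
    (ht₀s : t₀ ≤ s) (hst : s ≤ t) (hpos : 0 < sqTail Z t)
    (hhalf : sqTail Z s ≤ 2 * sqTail Z t) :
    ∫ x in s..t, Z x ≤ K * sqTail Z t ^ θ := by
  set y := sqTail Z t
  have hsub : Ioc s t ⊆ Ici t₀ := fun τ hτ => ht₀s.trans hτ.1.le
  have hm : 0 < y ^ (1 - θ) / K := by positivity
  have hmZ : ∀ᵐ τ ∂volume.restrict (Ioc s t), y ^ (1 - θ) / K ≤ Z τ := by
    filter_upwards [ae_restrict_of_ae_restrict_of_subset hsub hlow,
      ae_restrict_mem measurableSet_Ioc] with τ hτ hmem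
    rw [div_le_iff₀' hK]
    calc y ^ (1 - θ) ≤ sqTail Z τ ^ (1 - θ) :=
          Real.rpow_le_rpow hpos.le
            (sqTail_antitoneOn hZ2 (hsub hmem) (ht₀s.trans hst) hmem.2) (sub_nonneg.2 hθ)
      _ ≤ K * Z τ := hτ
  rw [intervalIntegral.integral_of_le hst]
  calc ∫ x in Ioc s t, Z x
      ≤ (∫ x in Ioc s t, Z x ^ 2) / (y ^ (1 - θ) / K) :=
        integral_le_integral_sq_div hm hZ
          (hZ2.mono_set (Ioc_subset_Ioi_self.trans (Ioi_subset_Ioi ht₀s))) hmZ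
    _ = (sqTail Z s - y) / (y ^ (1 - θ) / K) := by rw [sqTail_sub_sqTail hZ2 ht₀s hst]
    _ ≤ y / (y ^ (1 - θ) / K) := by gcongr; linarith
    _ = K * y ^ θ := by
        have hyθ := Real.rpow_sub hpos 1 (1 - θ)
        rw [Real.rpow_one, sub_sub_cancel] at hyθ
        rw [hyθ]
        field_simp

lemma integrableOn_Ioi_of_sqTail_pos {Z : ℝ → ℝ} {θ K t₀ : ℝ} (hθ0 : 0 < θ) (hθ1 : θ ≤ 1)
    (hK : 0 < K) (hZ : AEStronglyMeasurable Z (volume.restrict (Ioi t₀)))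
    (hnn : ∀ t, 0 ≤ Z t) (hZ2 : IntegrableOn (fun x => Z x ^ 2) (Ioi t₀))
    (hlow : ∀ᵐ τ ∂volume.restrict (Ici t₀), sqTail Z τ ^ (1 - θ) ≤ K * Z τ)
    (hpos : ∀ t ≥ t₀, 0 < sqTail Z t) : IntegrableOn Z (Ioi t₀) := by
  obtain ⟨u, hu0, hu, hutop, hlevel⟩ := exists_seq_halving (g := sqTail Z)
    hZ2.continuousOn_Ici_primitive_Ioi (tendsto_integral_Ioi_zero tendsto_id)
    (sqTail_antitoneOn hZ2) hpos
  have hut₀ : ∀ n, t₀ ≤ u n := fun n => hu0 ▸ hu (Nat.zero_le n)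
  have hloc : ∀ {s t}, t₀ ≤ s → IntegrableOn Z (Ioc s t) := fun hs =>
    have hsub := Ioc_subset_Ioi_self.trans (Ioi_subset_Ioi hs)
    integrable_of_integrable_sq (hZ.mono_set hsub) (hZ2.mono_set hsub)
  set y₀ := sqTail Z t₀
  set ρ : ℝ := (2 ^ θ)⁻¹
  have hρ1 : ρ < 1 := inv_lt_one_of_one_lt₀ (Real.one_lt_rpow one_lt_two hθ0)
  have hpiece : ∀ n, ∫ x in u n..u (n + 1), Z x ≤ K * y₀ ^ θ * ρ ^ n := by
    intro n
    have hhalf : sqTail Z (u n) ≤ 2 * sqTail Z (u (n + 1)) := by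
      rcases n with _ | n
      · rw [hu0, hlevel 0, pow_zero, div_one]
        linarith [sqTail_nonneg Z t₀]
      · rw [hlevel n, hlevel (n + 1), pow_succ, ← div_div, mul_div_cancel₀ _ two_ne_zero]
    calc ∫ x in u n..u (n + 1), Z x ≤ K * sqTail Z (u (n + 1)) ^ θ :=
          intervalIntegral_le_mul_sqTail_rpow hθ1 hK (hloc (hut₀ n)) hZ2 hlow (hut₀ n)
            (hu n.le_succ) (hpos _ (hut₀ _)) hhalf
      _ = K * y₀ ^ θ * ρ ^ n := by
          rw [hlevel, Real.div_rpow (sqTail_nonneg Z t₀) (by positivity),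
            ← Real.rpow_pow_comm zero_le_two, inv_pow, mul_assoc, div_eq_mul_inv]
  refine integrableOn_Ioi_of_intervalIntegral_norm_bounded (K * y₀ ^ θ / (1 - ρ)) t₀
    (fun n => hloc le_rfl) hutop (Eventually.of_forall fun n => ?_)
  calc ∫ x in t₀..u n, ‖Z x‖ = ∑ k ∈ Finset.range n, ∫ x in u k..u (k + 1), Z x := by
        simp_rw [Real.norm_of_nonneg (hnn _)]
        rw [intervalIntegral.sum_integral_adjacent_intervals fun k _ =>
          (intervalIntegrable_iff_integrableOn_Ioc_of_le (hu k.le_succ)).2 (hloc (hut₀ k)), hu0]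
    _ ≤ ∑ k ∈ Finset.range n, K * y₀ ^ θ * ρ ^ k := Finset.sum_le_sum fun k _ => hpiece k
    _ ≤ K * y₀ ^ θ / (1 - ρ) := by
        rw [← Finset.mul_sum, div_eq_mul_inv]
        refine mul_le_mul_of_nonneg_left ?_
          (mul_nonneg hK.le (Real.rpow_nonneg (sqTail_nonneg Z t₀) θ))
        simpa using geom_sum_Ico_le_of_lt_one (m := 0) (n := n) (by positivity) hρ1

/-- Feireisl–Simondon lemma: if `Z ≥ 0` is square integrable on `(0,∞)`
and `∫_t^∞ Z² ≤ C Z(t)^{1/(1-θ)}` for a.e. `t ≥ t₀`, with `θ ∈ (0,1/2)`,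
then `Z ∈ L¹(t₀,∞)`. -/
theorem stmt7 (θ : ℝ) (hθ0 : 0 < θ) (hθ : θ < 1/2)
    (Z : ℝ → ℝ) (hmeas : Measurable Z) (hnn : ∀ t, 0 ≤ Z t)
    (hL2 : IntegrableOn (fun t => Z t ^ 2) (Set.Ioi (0:ℝ)))
    (C t₀ : ℝ) (hC : 0 < C) (ht₀ : 0 ≤ t₀)
    (hineq : ∀ᵐ t ∂(volume.restrict (Set.Ici t₀)),
      (∫ τ in Set.Ioi t, Z τ ^ 2) ≤ C * Z t ^ ((1:ℝ) / (1 - θ))) :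
    IntegrableOn Z (Set.Ioi t₀) := by
  have hθ1 : θ < 1 := by linarith
  have hZ2 : IntegrableOn (fun x => Z x ^ 2) (Ioi t₀) := hL2.mono_set (Ioi_subset_Ioi ht₀)
  have hlow : ∀ᵐ τ ∂volume.restrict (Ici t₀), sqTail Z τ ^ (1 - θ) ≤ C ^ (1 - θ) * Z τ := by
    filter_upwards [hineq] with τ hτ
    exact rpow_one_sub_le_mul_of_le_mul_rpow hθ1 hC (sqTail_nonneg Z τ) (hnn τ) hτ
  by_cases! hpos : ∀ t ≥ t₀, 0 < sqTail Z t
  · exact integrableOn_Ioi_of_sqTail_pos hθ0 hθ1.le (by positivity)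
      hmeas.aestronglyMeasurable.restrict hnn hZ2 hlow hpos
  obtain ⟨T, hT, hT0⟩ := hpos
  rw [← Ioc_union_Ioi_eq_Ioi hT]
  exact IntegrableOn.union
    (integrable_of_integrable_sq hmeas.aestronglyMeasurable.restrict
      (hZ2.mono_set Ioc_subset_Ioi_self))
    (integrableOn_Ioi_of_sqTail_eq_zero (hZ2.mono_set (Ioi_subset_Ioi hT))
      (hT0.antisymm (sqTail_nonneg Z T)))
end

section
/- Let θ ∈ (0,1/2), β > 0, and let W : [0,∞) → [0,∞) be differentiable, nonincreasing, with W(t) → 0 as t → ∞, and satisfying W(t)^{2(1−θ)} ≤ −C (d/dt)W(t) + C e^{−2t/β} for all t ≥ t₀, for some constants C > 0, t₀ ≥ 0. Then there exists C' > 0 such that 0 ≤ W(t) ≤ C' (1+t)^{−1/(1−2θ)} for all t ≥ 0. -/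
/-!
With `α = 2(1 - θ) > 1` and `α μ = 2 / β`, the perturbation `V = W + e^{-μ t}` absorbs the
forcing term: since `(e^{-μ t})^α = e^{-2t/β} ≤ e^{-μ t}`, it satisfies the unforced
Łojasiewicz inequality `V^α ≤ -K V'` on `[t₀, ∞)`. There `(V^{1-α})' ≥ (α - 1)/K`, so
`V^{1-α}` grows linearly and `W ≤ V ≤ c (1 + t)^{-1/(α-1)}`; on `[0, t₀]`, `W ≤ W 0`.
-/

open Real Set

lemma Real.rpow_add_le_mul_rpow_add_rpow {a b p : ℝ} (ha : 0 ≤ a) (hb : 0 ≤ b)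
    (hp : 1 ≤ p) :
    (a + b) ^ p ≤ 2 ^ (p - 1) * (a ^ p + b ^ p) := by
  lift a to NNReal using ha
  lift b to NNReal using hb
  exact_mod_cast NNReal.rpow_add_le_mul_rpow_add_rpow a b hp

lemma HasDerivAt.nonpos_of_antitoneOn_Ici {f : ℝ → ℝ} {f' a x : ℝ}
    (hf : AntitoneOn f (Ici a)) (hx : a ≤ x) (hd : HasDerivAt f f' x) : f' ≤ 0 :=
  hd.hasDerivWithinAt.nonpos_of_antitoneOn (accPt_principal_iff_nhdsWithin.2 <|
    (nhdsGT_neBot x).mono <|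
      nhdsWithin_mono x fun _ hy => ⟨hx.trans (le_of_lt hy), ne_of_gt hy⟩) hf

lemma exists_pos_mul_one_add_le {a δ T : ℝ} (ha : 0 < a) (hδ : 0 < δ) (hT : 0 ≤ T) :
    ∃ ε > 0, ∀ t ≥ T, ε * (1 + t) ≤ a + δ * (t - T) := by
  refine ⟨min δ (a / (1 + T)), lt_min hδ (by positivity), fun t ht => ?_⟩
  have hεa : min δ (a / (1 + T)) * (1 + T) ≤ a :=
    (le_div_iff₀ (by positivity)).1 (min_le_right _ _)
  have hεδ : min δ (a / (1 + T)) * (t - T) ≤ δ * (t - T) :=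
    mul_le_mul_of_nonneg_right (min_le_left _ _) (sub_nonneg.2 ht)
  calc min δ (a / (1 + T)) * (1 + t)
      = min δ (a / (1 + T)) * (1 + T) + min δ (a / (1 + T)) * (t - T) := by ring
    _ ≤ a + δ * (t - T) := add_le_add hεa hεδ

section LojasiewiczInequality

variable {V V' : ℝ → ℝ} {α K T : ℝ}

theorem le_rpow_one_sub_of_rpow_le_neg_deriv (hα : 1 < α) (hK : 0 < K)
    (hV : ∀ t ≥ T, HasDerivAt V (V' t) t) (hpos : ∀ t ≥ T, 0 < V t)
    (hineq : ∀ t ≥ T, V t ^ α ≤ -K * V' t) :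
    ∀ t ≥ T, V T ^ (1 - α) + (α - 1) / K * (t - T) ≤ V t ^ (1 - α) := by
  have hderiv : ∀ t ≥ T, HasDerivAt (fun s => V s ^ (1 - α) - (α - 1) / K * s)
      (V' t * (1 - α) * V t ^ (1 - α - 1) - (α - 1) / K) t := fun t ht =>
    ((hV t ht).rpow_const (Or.inl (hpos t ht).ne')).sub
      (((hasDerivAt_id' t).const_mul _).congr_deriv (mul_one _))
  have hderiv_nonneg : ∀ t ≥ T, (α - 1) / K ≤ V' t * (1 - α) * V t ^ (1 - α - 1) := by
    intro t ht
    have hVα : 0 < V t ^ α := rpow_pos_of_pos (hpos t ht) α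
    rw [show 1 - α - 1 = -α by ring, rpow_neg (hpos t ht).le,
      show V' t * (1 - α) * (V t ^ α)⁻¹ = (α - 1) * -V' t / V t ^ α by field_simp; ring,
      le_div_iff₀ hVα]
    calc (α - 1) / K * V t ^ α = (α - 1) * (V t ^ α / K) := by ring
      _ ≤ (α - 1) * -V' t :=
          mul_le_mul_of_nonneg_left ((div_le_iff₀ hK).2 (by linarith [hineq t ht])) (by linarith)
  have hmono : MonotoneOn (fun s => V s ^ (1 - α) - (α - 1) / K * s) (Ici T) := by
    refine monotoneOn_of_hasDerivWithinAt_nonneg (convex_Ici T)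
      (fun t ht => (hderiv t ht).continuousAt.continuousWithinAt)
      (fun t ht => (hderiv t (interior_subset ht)).hasDerivWithinAt) (fun t ht => ?_)
    linarith [hderiv_nonneg t (interior_subset ht)]
  intro t ht
  have := hmono self_mem_Ici ht ht
  dsimp only at this
  linarith

theorem exists_le_mul_one_add_rpow_of_rpow_le_neg_deriv (hα : 1 < α) (hK : 0 < K) (hT : 0 ≤ T)
    (hV : ∀ t ≥ T, HasDerivAt V (V' t) t) (hpos : ∀ t ≥ T, 0 < V t)
    (hineq : ∀ t ≥ T, V t ^ α ≤ -K * V' t) :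
    ∃ c > 0, ∀ t ≥ T, V t ≤ c * (1 + t) ^ (-(1 / (α - 1))) := by
  obtain ⟨ε, hε, hlin⟩ := exists_pos_mul_one_add_le (rpow_pos_of_pos (hpos T le_rfl) (1 - α))
    (div_pos (sub_pos.2 hα) hK) hT
  refine ⟨ε ^ (-(1 / (α - 1))), rpow_pos_of_pos hε _, fun t ht => ?_⟩
  have hgrowth :=
    (hlin t ht).trans (le_rpow_one_sub_of_rpow_le_neg_deriv hα hK hV hpos hineq t ht)
  have hinv : V t = (V t ^ (1 - α)) ^ (-(1 / (α - 1))) := by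
    rw [← rpow_mul (hpos t ht).le, show (1 - α) * -(1 / (α - 1)) = 1 by
      field_simp [(sub_pos.2 hα).ne']; ring, rpow_one]
  calc V t = (V t ^ (1 - α)) ^ (-(1 / (α - 1))) := hinv
    _ ≤ (ε * (1 + t)) ^ (-(1 / (α - 1))) :=
        rpow_le_rpow_of_nonpos (mul_pos hε (by linarith)) hgrowth
          (neg_nonpos.2 (one_div_nonneg.2 (sub_pos.2 hα).le))
    _ = ε ^ (-(1 / (α - 1))) * (1 + t) ^ (-(1 / (α - 1))) := mul_rpow hε.le (by linarith)

end LojasiewiczInequality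

theorem exists_rpow_add_exp_le_neg_deriv {W W' : ℝ → ℝ} {α C μ T : ℝ} (hα : 1 ≤ α)
    (hC : 0 ≤ C) (hμ : 0 < μ) (hT : 0 ≤ T) (hnn : ∀ t ≥ T, 0 ≤ W t)
    (hW' : ∀ t ≥ T, W' t ≤ 0)
    (hineq : ∀ t ≥ T, W t ^ α ≤ -C * W' t + C * exp (-(α * μ) * t)) :
    ∃ K > 0, ∀ t ≥ T, (W t + exp (-μ * t)) ^ α ≤ -K * (W' t - μ * exp (-μ * t)) := by
  have hCμ' : 0 < (C + 1) / μ := div_pos (by linarith) hμ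
  have hCμ : 0 < C + (C + 1) / μ := add_pos_of_nonneg_of_pos hC hCμ'
  refine ⟨2 ^ (α - 1) * (C + (C + 1) / μ), by positivity, fun t ht => ?_⟩
  set e := exp (-μ * t)
  have he : 0 ≤ e := (exp_pos _).le
  have heα : e ^ α ≤ e :=
    rpow_le_self_of_le_one he
      (exp_le_one_iff.2 (mul_nonpos_of_nonpos_of_nonneg (neg_nonpos.2 hμ.le) (hT.trans ht))) hα
  have hpert : W t ^ α + e ^ α ≤ -C * W' t + (C + 1) * e := by
    have hforced := hineq t ht
    rw [show -(α * μ) * t = -μ * t * α by ring, exp_mul] at hforced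
    linarith [mul_le_mul_of_nonneg_left heα hC]
  have hslack : 0 ≤ (C + 1) / μ * -W' t + C * μ * e :=
    add_nonneg (mul_nonneg hCμ'.le (neg_nonneg.2 (hW' t ht))) (by positivity)
  calc (W t + e) ^ α ≤ 2 ^ (α - 1) * (W t ^ α + e ^ α) :=
        rpow_add_le_mul_rpow_add_rpow (hnn t ht) he hα
    _ ≤ 2 ^ (α - 1) * ((C + (C + 1) / μ) * (-W' t + μ * e)) := by
        gcongr
        calc W t ^ α + e ^ α ≤ -C * W' t + (C + 1) * e := hpert
          _ ≤ -C * W' t + (C + 1) * e + ((C + 1) / μ * -W' t + C * μ * e) := by linarith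
          _ = (C + (C + 1) / μ) * (-W' t + μ * e) := by field_simp; ring
    _ = -(2 ^ (α - 1) * (C + (C + 1) / μ)) * (W' t - μ * e) := by ring

theorem exists_pos_le_mul_one_add_rpow_neg {f : ℝ → ℝ} {T M c γ : ℝ} (hc : 0 < c)
    (hγ : 0 ≤ γ) (hsmall : ∀ t ∈ Icc 0 T, f t ≤ M)
    (hlarge : ∀ t ≥ T, f t ≤ c * (1 + t) ^ (-γ)) :
    ∃ C' : ℝ, 0 < C' ∧ ∀ t ≥ (0:ℝ), f t ≤ C' * (1 + t) ^ (-γ) := by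
  refine ⟨max c (|M| * (1 + T) ^ γ), lt_max_of_lt_left hc, fun t ht => ?_⟩
  have hdecay : 0 ≤ (1 + t) ^ (-γ) := rpow_nonneg (by linarith) _
  rcases le_total T t with hTt | htT
  · exact (hlarge t hTt).trans (mul_le_mul_of_nonneg_right (le_max_left _ _) hdecay)
  · calc f t ≤ |M| * (1 + T) ^ γ * (1 + T) ^ (-γ) := by
          rw [mul_assoc, ← rpow_add (show (0:ℝ) < 1 + T by linarith), add_neg_cancel,
            rpow_zero, mul_one]
          exact (hsmall t ⟨ht, htT⟩).trans (le_abs_self M)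
      _ ≤ |M| * (1 + T) ^ γ * (1 + t) ^ (-γ) :=
          mul_le_mul_of_nonneg_left
            (rpow_le_rpow_of_nonpos (by linarith) (by linarith) (neg_nonpos.2 hγ))
            (mul_nonneg (abs_nonneg M) (rpow_nonneg (by linarith) γ))
      _ ≤ max c (|M| * (1 + T) ^ γ) * (1 + t) ^ (-γ) := by gcongr; exact le_max_right _ _

theorem stmt9_general (θ β C t₀ : ℝ) (hθ : θ < 1/2) (hβ : 0 < β)
    (hC : 0 < C) (ht₀ : 0 ≤ t₀)
    (W W' : ℝ → ℝ)
    (hderiv : ∀ t ≥ (0:ℝ), HasDerivAt W (W' t) t)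
    (hnn : ∀ t ≥ (0:ℝ), 0 ≤ W t)
    (hmono : AntitoneOn W (Set.Ici (0:ℝ)))
    (hineq : ∀ t ≥ t₀, W t ^ (2 * (1 - θ)) ≤ -C * W' t + C * Real.exp (-2 * t / β)) :
    ∃ C' : ℝ, 0 < C' ∧ ∀ t ≥ (0:ℝ), W t ≤ C' * (1 + t) ^ (-(1 / (1 - 2 * θ))) := by
  set α := 2 * (1 - θ)
  set μ := 2 / (α * β)
  have hα : 1 < α := by linarith
  have hμ : 0 < μ := by positivity
  obtain ⟨K, hK, hVineq⟩ := exists_rpow_add_exp_le_neg_deriv hα.le hC.le hμ ht₀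
    (fun t ht => hnn t (ht₀.trans ht))
    (fun t ht => (hderiv t (ht₀.trans ht)).nonpos_of_antitoneOn_Ici hmono (ht₀.trans ht))
    (fun t ht => by
      rw [show -(α * μ) * t = -2 * t / β by simp only [μ]; field_simp]
      exact hineq t ht)
  obtain ⟨c, hc, hdecay⟩ := exists_le_mul_one_add_rpow_of_rpow_le_neg_deriv hα hK ht₀
    (fun t ht => (hderiv t (ht₀.trans ht)).add
      (((hasDerivAt_id' t).const_mul (-μ)).exp.congr_deriv (by ring)))
    (fun t ht => add_pos_of_nonneg_of_pos (hnn t (ht₀.trans ht)) (exp_pos _)) hVineq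
  rw [show 1 - 2 * θ = α - 1 by ring]
  exact exists_pos_le_mul_one_add_rpow_neg hc (one_div_nonneg.2 (by linarith))
    (fun t ht => hmono self_mem_Ici ht.1 ht.1)
    (fun t ht => (le_add_of_nonneg_right (exp_pos _).le).trans (hdecay t ht))

/-- Łojasiewicz-type ODE decay: if `W ≥ 0` is nonincreasing on `[0,∞)`,
tends to `0`, and `W^{2(1-θ)} ≤ -C W' + C e^{-2t/β}` for `t ≥ t₀`, then
`W(t) ≤ C'(1+t)^{-1/(1-2θ)}`. -/
theorem stmt9 (θ β C t₀ : ℝ) (hθ0 : 0 < θ) (hθ : θ < 1/2) (hβ : 0 < β)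
    (hC : 0 < C) (ht₀ : 0 ≤ t₀)
    (W W' : ℝ → ℝ)
    (hderiv : ∀ t ≥ (0:ℝ), HasDerivAt W (W' t) t)
    (hnn : ∀ t ≥ (0:ℝ), 0 ≤ W t)
    (hmono : AntitoneOn W (Set.Ici (0:ℝ)))
    (hlim : Filter.Tendsto W Filter.atTop (nhds 0))
    (hineq : ∀ t ≥ t₀, W t ^ (2 * (1 - θ)) ≤ -C * W' t + C * Real.exp (-2 * t / β)) :
    ∃ C' : ℝ, 0 < C' ∧ ∀ t ≥ (0:ℝ), W t ≤ C' * (1 + t) ^ (-(1 / (1 - 2 * θ))) :=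
  stmt9_general θ β C t₀ hθ hβ hC ht₀ W W' hderiv hnn hmono hineq
end

section
/- Let X be a metric space with distance dist, and let S(t) be a semigroup on X satisfying dist(S(t)z₁, S(t)z₂) ≤ C₀ e^{K₀ t} dist(z₁, z₂) for all z₁, z₂ ∈ X, t ≥ 0, for some constants C₀, K₀ > 0. Suppose B₁, B₂, B₃ ⊂ X satisfy dist_X(S(t)B₁, B₂) ≤ C₁ e^{−α₁ t} and dist_X(S(t)B₂, B₃) ≤ C₂ e^{−α₂ t} for all t ≥ 0 (Hausdorff semidistance). Then dist_X(S(t)B₁, B₃) ≤ C' e^{−α' t} for all t ≥ 0, with C' = C₀C₁ + C₂ and α' = α₁α₂/(K₀ + α₁ + α₂). -/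
open scoped ENNReal

/-- Hausdorff semidistance (in `ℝ≥0∞`) between two sets. -/
noncomputable def semidist {X : Type*} [PseudoMetricSpace X] (A B : Set X) : ℝ≥0∞ :=
  ⨆ a ∈ A, ⨅ b ∈ B, edist a b

/-- Transitivity of exponential attraction (Fabrie–Galusinski–Miranville–Zelik):
if the semigroup is Lipschitz with constant `C₀ e^{K₀ t}`, `B₂` attracts `B₁`
exponentially and `B₃` attracts `B₂` exponentially, then `B₃` attracts `B₁`
exponentially with `C' = C₀C₁ + C₂` and `α' = α₁α₂/(K₀+α₁+α₂)`. -/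
theorem stmt12 {X : Type*} [MetricSpace X]
    (S : ℝ → X → X)
    (hS0 : ∀ z, S 0 z = z)
    (hsemi : ∀ s ≥ (0:ℝ), ∀ t ≥ (0:ℝ), ∀ z, S (s + t) z = S s (S t z))
    (C₀ K₀ C₁ C₂ α₁ α₂ : ℝ)
    (hC₀ : 0 < C₀) (hK₀ : 0 < K₀) (hC₁ : 0 < C₁) (hC₂ : 0 < C₂)
    (hα₁ : 0 < α₁) (hα₂ : 0 < α₂)
    (hLip : ∀ t ≥ (0:ℝ), ∀ z₁ z₂ : X,
      dist (S t z₁) (S t z₂) ≤ C₀ * Real.exp (K₀ * t) * dist z₁ z₂)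
    (B₁ B₂ B₃ : Set X)
    (h₁ : ∀ t ≥ (0:ℝ), semidist (S t '' B₁) B₂ ≤ ENNReal.ofReal (C₁ * Real.exp (-α₁ * t)))
    (h₂ : ∀ t ≥ (0:ℝ), semidist (S t '' B₂) B₃ ≤ ENNReal.ofReal (C₂ * Real.exp (-α₂ * t))) :
    ∀ t ≥ (0:ℝ), semidist (S t '' B₁) B₃ ≤
      ENNReal.ofReal ((C₀ * C₁ + C₂) *
        Real.exp (-(α₁ * α₂ / (K₀ + α₁ + α₂)) * t)) := by
  intro t ht
  set D := K₀ + α₁ + α₂ with hD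
  have hDpos : 0 < D := by positivity
  set t₂ := α₁ * t / D with ht₂def
  have ht₂ : 0 ≤ t₂ := by positivity
  set t₁ := t - t₂ with ht₁def
  have ht₂le : t₂ ≤ t := by
    rw [ht₂def, div_le_iff₀ hDpos]
    nlinarith
  have ht₁ : 0 ≤ t₁ := by rw [ht₁def]; linarith
  have hDne : (K₀ + α₁ + α₂) ≠ 0 := by positivity
  have hexp1 : K₀ * t₂ - α₁ * t₁ = -(α₁ * α₂ / D) * t := by
    rw [ht₁def, ht₂def, hD]; field_simp; ring
  have hexp2 : -α₂ * t₂ = -(α₁ * α₂ / D) * t := by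
    rw [ht₂def]; ring
  set E := Real.exp (-(α₁ * α₂ / D) * t) with hE
  have hEpos : 0 < E := Real.exp_pos _
  rw [semidist]
  apply iSup₂_le
  rintro x ⟨a, ha, rfl⟩
  apply ENNReal.le_of_forall_pos_le_add
  intro ε hε _
  set L := C₀ * Real.exp (K₀ * t₂) with hL
  have hLpos : 0 < L := by positivity
  set ε' := (ε : ℝ) / (L + 1) with hε'def
  have hε'pos : 0 < ε' := by positivity
  -- pick b₂ ∈ B₂ close to S t₁ a
  have hM₁ : (⨅ b ∈ B₂, edist (S t₁ a) b) ≤ ENNReal.ofReal (C₁ * Real.exp (-α₁ * t₁)) :=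
    le_trans (le_iSup₂_of_le (S t₁ a) ⟨a, ha, rfl⟩ le_rfl) (h₁ t₁ ht₁)
  have hlt₁ : (⨅ b ∈ B₂, edist (S t₁ a) b)
      < ENNReal.ofReal (C₁ * Real.exp (-α₁ * t₁) + ε') := by
    refine lt_of_le_of_lt hM₁ ?_
    rw [ENNReal.ofReal_add (by positivity) hε'pos.le]
    exact ENNReal.lt_add_right (by simp) (by simpa [ENNReal.ofReal_pos] using hε'pos)
  obtain ⟨b₂, hb₂mem, hb₂⟩ : ∃ b₂ ∈ B₂,
      dist (S t₁ a) b₂ < C₁ * Real.exp (-(α₁ * t₁)) + ε' := by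
    simpa [iInf_lt_iff] using hlt₁
  have hd1 : dist (S t₁ a) b₂ ≤ C₁ * Real.exp (-α₁ * t₁) + ε' := by
    rw [neg_mul]; exact hb₂.le
  -- pick b₃ ∈ B₃ close to S t₂ b₂
  have hM₂ : (⨅ b ∈ B₃, edist (S t₂ b₂) b) ≤ ENNReal.ofReal (C₂ * Real.exp (-α₂ * t₂)) :=
    le_trans (le_iSup₂_of_le (S t₂ b₂) ⟨b₂, hb₂mem, rfl⟩ le_rfl) (h₂ t₂ ht₂)
  have hlt₂ : (⨅ b ∈ B₃, edist (S t₂ b₂) b)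
      < ENNReal.ofReal (C₂ * Real.exp (-α₂ * t₂) + ε') := by
    refine lt_of_le_of_lt hM₂ ?_
    rw [ENNReal.ofReal_add (by positivity) hε'pos.le]
    exact ENNReal.lt_add_right (by simp) (by simpa [ENNReal.ofReal_pos] using hε'pos)
  obtain ⟨b₃, hb₃mem, hb₃⟩ : ∃ b₃ ∈ B₃,
      dist (S t₂ b₂) b₃ < C₂ * Real.exp (-(α₂ * t₂)) + ε' := by
    simpa [iInf_lt_iff] using hlt₂
  have hd2 : dist (S t₂ b₂) b₃ ≤ C₂ * Real.exp (-α₂ * t₂) + ε' := by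
    rw [neg_mul]; exact hb₃.le
  -- semigroup splitting
  have hsplit : S t a = S t₂ (S t₁ a) := by
    have := hsemi t₂ ht₂ t₁ ht₁ a
    rw [show t₂ + t₁ = t by rw [ht₁def]; ring] at this
    exact this
  have hd0 : dist (S t a) (S t₂ b₂) ≤ L * (C₁ * Real.exp (-α₁ * t₁) + ε') := by
    rw [hsplit]
    calc dist (S t₂ (S t₁ a)) (S t₂ b₂) ≤ L * dist (S t₁ a) b₂ := hLip t₂ ht₂ _ _
      _ ≤ L * (C₁ * Real.exp (-α₁ * t₁) + ε') := by
          exact mul_le_mul_of_nonneg_left hd1 hLpos.le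
  have hkey : dist (S t a) b₃ ≤ (C₀ * C₁ + C₂) * E + ε := by
    have htot : dist (S t a) b₃ ≤ L * (C₁ * Real.exp (-α₁ * t₁) + ε')
        + (C₂ * Real.exp (-α₂ * t₂) + ε') :=
      le_trans (dist_triangle _ (S t₂ b₂) _) (add_le_add hd0 hd2)
    have h1 : L * (C₁ * Real.exp (-α₁ * t₁)) = C₀ * C₁ * E := by
      rw [hL, hE, ← hexp1, show K₀ * t₂ - α₁ * t₁ = K₀ * t₂ + -α₁ * t₁ by ring,
        Real.exp_add]
      ring
    have h2 : C₂ * Real.exp (-α₂ * t₂) = C₂ * E := by rw [hE, ← hexp2]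
    have h3 : L * ε' + ε' = ε := by
      rw [hε'def]; field_simp
    calc dist (S t a) b₃ ≤ L * (C₁ * Real.exp (-α₁ * t₁) + ε')
        + (C₂ * Real.exp (-α₂ * t₂) + ε') := htot
      _ = L * (C₁ * Real.exp (-α₁ * t₁)) + C₂ * Real.exp (-α₂ * t₂) + (L * ε' + ε') := by ring
      _ = (C₀ * C₁ + C₂) * E + ε := by rw [h1, h2, h3]; ring
  calc (⨅ b ∈ B₃, edist (S t a) b) ≤ edist (S t a) b₃ := biInf_le _ hb₃mem
    _ = ENNReal.ofReal (dist (S t a) b₃) := edist_dist _ _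
    _ ≤ ENNReal.ofReal ((C₀ * C₁ + C₂) * E + ε) := ENNReal.ofReal_le_ofReal hkey
    _ = ENNReal.ofReal ((C₀ * C₁ + C₂) * E) + ε := by
        rw [ENNReal.ofReal_add (by positivity) ε.coe_nonneg, ENNReal.ofReal_coe_nnreal]
end
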